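/- arXiv:2407.17168 — 2 statements merged into one kernel-verified Lean document; each statement's English description precedes it below -/
import Mathlib

section
/- For a non-crossing partition π of [n] with blocks B_1,...,B_m, define wt'(π) = ∑_i ∑_{j ∈ B_i} (j - min B_i). Then ∑_{π ∈ NC(n)} q^{wt'(π)} = q^{binom(n,2)} C_n(q^{-1}), where C_n(q) is the Carlitz q-Catalan number. -/
open Finset Polynomial

/-- `P` is a set partition of `{1,…,n}`. -/
def IsPartitionOf (n : ℕ) (P : Finset (Finset ℕ)) : Prop :=
  (∀ B ∈ P, B.Nonempty) ∧ (∀ B ∈ P, B ⊆ Finset.Icc 1 n) ∧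
  (∀ i ∈ Finset.Icc 1 n, ∃! B, B ∈ P ∧ i ∈ B)

/-- `P` is non-crossing. -/
def IsNonCrossing (P : Finset (Finset ℕ)) : Prop :=
  ∀ B₁ ∈ P, ∀ B₂ ∈ P, ∀ a ∈ B₁, ∀ c ∈ B₁, ∀ b ∈ B₂, ∀ d ∈ B₂,
    a < b → b < c → c < d → B₁ = B₂

/-- `wt'(B) = ∑_{j ∈ B} (j - min B)`. -/
def blockWt' (B : Finset ℕ) : ℕ :=
  if h : B.Nonempty then ∑ j ∈ B, (j - B.min' h) else 0

/-- The Carlitz `q`-Catalan polynomials: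
`C_{n+1}(q) = ∑_{k=0}^{n} C_k(q) C_{n-k}(q) q^{(k+1)(n-k)}`, `C_0 = 1`. -/
noncomputable def carlitz : ℕ → Polynomial ℕ
  | 0 => 1
  | n + 1 =>
    ∑ k ∈ (Finset.range (n + 1)).attach,
      carlitz k.1 * carlitz (n - k.1) * X ^ ((k.1 + 1) * (n - k.1))
  decreasing_by
  · have := Finset.mem_range.mp k.2; omega
  · have := Finset.mem_range.mp k.2; omega

/-- `revAt D p = q^D · p(q⁻¹)` for `p` of degree at most `D`. -/
noncomputable def revAt (D : ℕ) (p : Polynomial ℕ) : Polynomial ℕ :=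
  ∑ i ∈ Finset.range (D + 1), C (p.coeff (D - i)) * X ^ i

/-!
In a non-crossing partition of `[a, b]`, let `i` be the least element of the block of `b`. A block
meeting both `[a, i)` and `(i, b)` would cross that block, so every other block lies in `[a, i)` or
in `[i, b]`. Deleting `b` from its block thus splits the partition into non-crossing partitions of
`[a, i)` and of `[i, b)`, and lowers `wt'` by `b - i`; conversely `b` can be put back into the block
of `i`. Writing `F(a, b)` for the generating function over `[a, b)`, this gives
`F(a, b + 1) = ∑_{a ≤ i ≤ b} q^(b - i) F(a, i) F(i, b)`, so `F(a, a + m)` depends only on `m` and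
satisfies the recursion obtained by reflecting the Carlitz recursion at degree `binom(m, 2)`.
-/

section Partition

variable {α : Type*}

def IsPartitionOn (S : Finset α) (P : Finset (Finset α)) : Prop :=
  (∀ B ∈ P, B.Nonempty) ∧ (∀ B ∈ P, B ⊆ S) ∧ (∀ i ∈ S, ∃! B, B ∈ P ∧ i ∈ B)

variable {S T : Finset α} {P Q : Finset (Finset α)}

namespace IsPartitionOn

theorem nonempty (hP : IsPartitionOn S P) {B : Finset α} (hB : B ∈ P) : B.Nonempty := hP.1 B hB

theorem subset (hP : IsPartitionOn S P) {B : Finset α} (hB : B ∈ P) : B ⊆ S := hP.2.1 B hB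

theorem exists_mem (hP : IsPartitionOn S P) {x : α} (hx : x ∈ S) : ∃ B ∈ P, x ∈ B :=
  (hP.2.2 x hx).exists

theorem eq_of_mem_of_mem (hP : IsPartitionOn S P) {B B' : Finset α} {x : α} (hB : B ∈ P)
    (hB' : B' ∈ P) (hx : x ∈ B) (hx' : x ∈ B') : B = B' :=
  (hP.2.2 x (hP.subset hB hx)).unique ⟨hB, hx⟩ ⟨hB', hx'⟩

theorem of_forall_mem (hne : ∀ B ∈ P, B.Nonempty) (hsub : ∀ B ∈ P, B ⊆ S)
    (hex : ∀ x ∈ S, ∃ B ∈ P, x ∈ B)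
    (huniq : ∀ B ∈ P, ∀ B' ∈ P, ∀ x, x ∈ B → x ∈ B' → B = B') : IsPartitionOn S P :=
  ⟨hne, hsub, fun x hx => by
    obtain ⟨B, hB, hxB⟩ := hex x hx
    exact ⟨B, ⟨hB, hxB⟩, fun B' hB' => huniq B' hB'.1 B hB x hB'.2 hxB⟩⟩

theorem disjoint (hP : IsPartitionOn S P) (hQ : IsPartitionOn T Q) (hST : Disjoint S T) :
    Disjoint P Q :=
  disjoint_left.mpr fun B hBP hBQ =>
    (hP.nonempty hBP).ne_empty (disjoint_self_iff_empty B |>.mp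
      (hST.mono (hP.subset hBP) (hQ.subset hBQ)))

theorem union [DecidableEq α] (hP : IsPartitionOn S P) (hQ : IsPartitionOn T Q)
    (hST : Disjoint S T) : IsPartitionOn (S ∪ T) (P ∪ Q) := by
  refine of_forall_mem ?_ ?_ ?_ ?_
  · simp only [mem_union]
    rintro B (hB | hB)
    exacts [hP.nonempty hB, hQ.nonempty hB]
  · simp only [mem_union]
    rintro B (hB | hB)
    exacts [(hP.subset hB).trans subset_union_left,
      (hQ.subset hB).trans subset_union_right]
  · simp only [mem_union]
    rintro x (hx | hx)
    · obtain ⟨B, hB, hxB⟩ := hP.exists_mem hx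
      exact ⟨B, Or.inl hB, hxB⟩
    · obtain ⟨B, hB, hxB⟩ := hQ.exists_mem hx
      exact ⟨B, Or.inr hB, hxB⟩
  · simp only [mem_union]
    rintro B (hB | hB) B' (hB' | hB') x hx hx'
    · exact hP.eq_of_mem_of_mem hB hB' hx hx'
    · exact absurd (hQ.subset hB' hx') (disjoint_left.mp hST (hP.subset hB hx))
    · exact absurd (hQ.subset hB hx) (disjoint_left.mp hST (hP.subset hB' hx'))
    · exact hQ.eq_of_mem_of_mem hB hB' hx hx'

theorem filter_union_left [DecidableEq α] (hP : IsPartitionOn S P) (hQ : IsPartitionOn T Q)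
    (hST : Disjoint S T) : (P ∪ Q).filter (· ⊆ S) = P := by
  rw [filter_union, filter_true_of_mem fun B hB => hP.subset hB,
    filter_false_of_mem fun B hB hBS => ?_, union_empty]
  obtain ⟨x, hx⟩ := hQ.nonempty hB
  exact disjoint_left.mp hST (hBS hx) (hQ.subset hB hx)

theorem filter_subset [DecidableEq α] (hP : IsPartitionOn S P)
    (hT : ∀ B ∈ P, B ⊆ T ∨ Disjoint B T) (hTS : T ⊆ S) : IsPartitionOn T (P.filter (· ⊆ T)) := by
  refine of_forall_mem (fun B hB => hP.nonempty (mem_filter.mp hB).1)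
    (fun B hB => (mem_filter.mp hB).2) (fun x hx => ?_)
    (fun B hB B' hB' _ => hP.eq_of_mem_of_mem (mem_filter.mp hB).1
      (mem_filter.mp hB').1)
  obtain ⟨B, hB, hxB⟩ := hP.exists_mem (hTS hx)
  refine ⟨B, mem_filter.mpr ⟨hB, ?_⟩, hxB⟩
  exact (hT B hB).resolve_right fun hdisj => disjoint_left.mp hdisj hxB hx

theorem eq_singleton_singleton {x : α} (hP : IsPartitionOn {x} P) : P = {{x}} := by
  obtain ⟨B, hB, -⟩ := hP.exists_mem (mem_singleton_self x)
  have hblock : ∀ B ∈ P, B = {x} := fun B hB =>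
    (hP.nonempty hB).subset_singleton_iff.mp (hP.subset hB)
  exact eq_singleton_iff_unique_mem.mpr ⟨hblock B hB ▸ hB, hblock⟩

theorem singleton (x : α) : IsPartitionOn {x} {{x}} :=
  of_forall_mem (by simp) (by simp) (by simp) (by simp)

theorem eq_empty (hP : IsPartitionOn ∅ P) : P = ∅ :=
  eq_empty_of_forall_notMem fun _ hB =>
    (hP.nonempty hB).ne_empty (subset_empty.mp (hP.subset hB))

theorem empty : IsPartitionOn (∅ : Finset α) ∅ :=
  of_forall_mem (by simp) (by simp) (by simp) (by simp)

end IsPartitionOn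

end Partition

namespace IsNonCrossing

variable {P Q : Finset (Finset ℕ)}

theorem mono (hQP : Q ⊆ P) (hP : IsNonCrossing P) : IsNonCrossing Q :=
  fun B₁ h₁ B₂ h₂ => hP B₁ (hQP h₁) B₂ (hQP h₂)

theorem image_of_subset {f : Finset ℕ → Finset ℕ} (hf : ∀ B ∈ P, f B ⊆ B)
    (hP : IsNonCrossing P) : IsNonCrossing (P.image f) := by
  simp only [IsNonCrossing, forall_mem_image]
  intro B₁ h₁ B₂ h₂ a ha c hc b hb d hd hab hbc hcd
  rw [hP B₁ h₁ B₂ h₂ a (hf B₁ h₁ ha) c (hf B₁ h₁ hc) b (hf B₂ h₂ hb) d (hf B₂ h₂ hd)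
    hab hbc hcd]

theorem union {S T : Finset ℕ} (hP : IsNonCrossing P) (hQ : IsNonCrossing Q)
    (hPS : ∀ B ∈ P, B ⊆ S) (hQT : ∀ B ∈ Q, B ⊆ T) (hST : ∀ x ∈ S, ∀ y ∈ T, x < y) :
    IsNonCrossing (P ∪ Q) := by
  intro B₁ h₁ B₂ h₂ a ha c hc b hb d hd hab hbc hcd
  rcases mem_union.mp h₁ with h₁ | h₁ <;> rcases mem_union.mp h₂ with h₂ | h₂
  · exact hP B₁ h₁ B₂ h₂ a ha c hc b hb d hd hab hbc hcd
  · exact absurd (hST c (hPS B₁ h₁ hc) b (hQT B₂ h₂ hb)) hbc.not_gt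
  · exact absurd (hST b (hPS B₂ h₂ hb) a (hQT B₁ h₁ ha)) hab.not_gt
  · exact hQ B₁ h₁ B₂ h₂ a ha c hc b hb d hd hab hbc hcd

end IsNonCrossing

theorem IsPartitionOn.subset_Ico_or_subset_Ico {a b i : ℕ} {π : Finset (Finset ℕ)}
    {B₀ : Finset ℕ} (hπ : IsPartitionOn (Ico a (b + 1)) π) (hNC : IsNonCrossing π)
    (hB₀ : B₀ ∈ π) (hi : i ∈ B₀) (hb : b ∈ B₀) (hmin : ∀ x ∈ B₀, i ≤ x) :
    ∀ B ∈ π, B ⊆ Ico a i ∨ B ⊆ Ico i (b + 1) := by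
  intro B hB
  have hground : ∀ x ∈ B, a ≤ x ∧ x < b + 1 := fun x hx => mem_Ico.mp (hπ.subset hB hx)
  by_cases hBB₀ : B = B₀
  · subst hBB₀
    exact Or.inr fun x hx => mem_Ico.mpr ⟨hmin x hx, (hground x hx).2⟩
  refine or_iff_not_imp_left.mpr fun hlow => ?_
  obtain ⟨y, hy, hyi⟩ : ∃ y ∈ B, i ≤ y := by
    obtain ⟨y, hy, hy'⟩ := not_subset.mp hlow
    exact ⟨y, hy, by simp only [mem_Ico, not_and, not_lt] at hy'; exact hy' (hground y hy).1⟩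
  have hy_notMem : y ∉ B₀ := fun h => hBB₀ (hπ.eq_of_mem_of_mem hB hB₀ hy h)
  intro x hx
  refine mem_Ico.mpr ⟨not_lt.mp fun hxi => hBB₀ ?_, (hground x hx).2⟩
  refine hNC B hB B₀ hB₀ x hx y hy i hi b hb hxi ?_ ?_
  · exact lt_of_le_of_ne hyi fun h => hy_notMem (h ▸ hi)
  · exact lt_of_le_of_ne (Nat.lt_succ_iff.mp (hground y hy).2) fun h => hy_notMem (h ▸ hb)

section AddToBlock

variable {α : Type*} [DecidableEq α]

def addToBlockOf (i b : α) (Q : Finset (Finset α)) : Finset (Finset α) :=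
  Q.image fun C => if i ∈ C then insert b C else C

variable {S C : Finset α} {Q H : Finset (Finset α)} {i b x : α}

theorem mem_ite_insert : x ∈ (if i ∈ C then insert b C else C) ↔ x ∈ C ∨ x = b ∧ i ∈ C := by
  split_ifs with h <;> simp [h, or_comm]

theorem erase_ite_insert (hbC : b ∉ C) : (if i ∈ C then insert b C else C).erase b = C := by
  split_ifs
  exacts [erase_insert hbC, erase_eq_of_notMem hbC]

theorem image_erase_addToBlockOf (hQ : IsPartitionOn S Q) (hb : b ∉ S) :
    (addToBlockOf i b Q).image (·.erase b) = Q := by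
  rw [addToBlockOf, image_image]
  refine (image_congr fun C hC => ?_).trans image_id
  exact erase_ite_insert fun h => hb (hQ.subset hC h)

theorem addToBlockOf_image_erase (hH : IsPartitionOn S H) (hB : ∃ B ∈ H, i ∈ B ∧ b ∈ B)
    (hib : i ≠ b) : addToBlockOf i b (H.image (·.erase b)) = H := by
  obtain ⟨B₀, hB₀, hiB₀, hbB₀⟩ := hB
  rw [addToBlockOf, image_image]
  refine (image_congr fun B hB => ?_).trans image_id
  by_cases hbB : b ∈ B
  · have hB_eq : B = B₀ := hH.eq_of_mem_of_mem hB hB₀ hbB hbB₀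
    subst hB_eq
    simp [hiB₀, hib, insert_erase hbB]
  · have hiB : i ∉ B := fun h => hbB (hH.eq_of_mem_of_mem hB₀ hB hiB₀ h ▸ hbB₀)
    simp [erase_eq_of_notMem hbB, hiB]

theorem IsPartitionOn.addToBlockOf (hQ : IsPartitionOn S Q) (hi : i ∈ S) (hb : b ∉ S) :
    IsPartitionOn (insert b S) (addToBlockOf i b Q) := by
  obtain ⟨C₀, hC₀, hiC₀⟩ := hQ.exists_mem hi
  refine IsPartitionOn.of_forall_mem ?_ ?_ ?_ ?_ <;>
    simp only [_root_.addToBlockOf, forall_mem_image, exists_mem_image]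
  · intro C hC
    obtain ⟨x, hx⟩ := hQ.nonempty hC
    exact ⟨x, mem_ite_insert.mpr (Or.inl hx)⟩
  · intro C hC x hx
    rcases mem_ite_insert.mp hx with hx | ⟨rfl, -⟩
    exacts [mem_insert_of_mem (hQ.subset hC hx), mem_insert_self _ _]
  · intro x hx
    rcases mem_insert.mp hx with rfl | hx
    · exact ⟨C₀, hC₀, mem_ite_insert.mpr (Or.inr ⟨rfl, hiC₀⟩)⟩
    · obtain ⟨C, hC, hxC⟩ := hQ.exists_mem hx
      exact ⟨C, hC, mem_ite_insert.mpr (Or.inl hxC)⟩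
  · intro C hC C' hC' x hx hx'
    rcases mem_ite_insert.mp hx with hx | ⟨rfl, hiC⟩ <;>
      rcases mem_ite_insert.mp hx' with hx' | ⟨hxb, hiC'⟩
    · rw [hQ.eq_of_mem_of_mem hC hC' hx hx']
    · exact absurd (hQ.subset hC hx) (hxb ▸ hb)
    · exact absurd (hQ.subset hC' hx') hb
    · rw [hQ.eq_of_mem_of_mem hC hC' hiC hiC']

theorem exists_mem_addToBlockOf (hQ : IsPartitionOn S Q) (hi : i ∈ S) :
    ∃ B ∈ addToBlockOf i b Q, i ∈ B ∧ b ∈ B := by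
  obtain ⟨C₀, hC₀, hiC₀⟩ := hQ.exists_mem hi
  exact ⟨insert b C₀, mem_image.mpr ⟨C₀, hC₀, if_pos hiC₀⟩, mem_insert_of_mem hiC₀,
    mem_insert_self _ _⟩

theorem IsPartitionOn.image_erase (hH : IsPartitionOn S H) (h : {b} ∉ H) :
    IsPartitionOn (S.erase b) (H.image (·.erase b)) := by
  refine IsPartitionOn.of_forall_mem ?_ ?_ ?_ ?_ <;> simp only [forall_mem_image, exists_mem_image]
  · intro B hB
    refine nonempty_iff_ne_empty.mpr fun hempty => ?_
    rcases (erase_eq_empty_iff B b).mp hempty with hB' | hB'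
    exacts [(hH.nonempty hB).ne_empty hB', h (hB' ▸ hB)]
  · exact fun B hB => erase_subset_erase b (hH.subset hB)
  · intro x hx
    obtain ⟨B, hB, hxB⟩ := hH.exists_mem (mem_of_mem_erase hx)
    exact ⟨B, hB, mem_erase.mpr ⟨ne_of_mem_erase hx, hxB⟩⟩
  · intro B hB B' hB' x hx hx'
    rw [hH.eq_of_mem_of_mem hB hB' (mem_of_mem_erase hx) (mem_of_mem_erase hx')]

end AddToBlock

theorem IsNonCrossing.addToBlockOf {S : Finset ℕ} {Q : Finset (Finset ℕ)} {i b : ℕ}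
    (hQ : IsPartitionOn S Q) (hNC : IsNonCrossing Q) (hmin : ∀ x ∈ S, i ≤ x)
    (hmax : ∀ x ∈ S, x < b) : IsNonCrossing (addToBlockOf i b Q) := by
  simp only [IsNonCrossing, _root_.addToBlockOf, forall_mem_image]
  intro C₁ hC₁ C₂ hC₂ a ha c hc y hy d hd hay hyc hcd
  have hmem : ∀ {C x}, C ∈ Q → x ∈ (if i ∈ C then insert b C else C) → x < b → x ∈ C :=
    fun hC hx hxb => (mem_ite_insert.mp hx).resolve_right fun h => hxb.ne h.1
  have hle : ∀ {x}, x ∈ (if i ∈ C₂ then insert b C₂ else C₂) → x ≤ b := fun hx =>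
    (mem_ite_insert.mp hx).elim (fun h => (hmax _ (hQ.subset hC₂ h)).le) fun h => h.1.le
  have hdb := hle hd
  have haC₁ := hmem hC₁ ha (by omega)
  have hcC₁ := hmem hC₁ hc (by omega)
  have hyC₂ := hmem hC₂ hy (by omega)
  suffices C₁ = C₂ by rw [this]
  rcases mem_ite_insert.mp hd with hdC₂ | ⟨-, hiC₂⟩
  · exact hNC C₁ hC₁ C₂ hC₂ a haC₁ c hcC₁ y hyC₂ d hdC₂ hay hyc hcd
  rcases (hmin a (hQ.subset hC₁ haC₁)).lt_or_eq with hia | rfl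
  · exact (hNC C₂ hC₂ C₁ hC₁ i hiC₂ y hyC₂ a haC₁ c hcC₁ hia hay hyc).symm
  · exact hQ.eq_of_mem_of_mem hC₁ hC₂ haC₁ hiC₂

def partitionWt' (P : Finset (Finset ℕ)) : ℕ := ∑ B ∈ P, blockWt' B

theorem blockWt'_insert {C : Finset ℕ} {b : ℕ} (hC : C.Nonempty) (hb : ∀ x ∈ C, x < b) :
    blockWt' (insert b C) = blockWt' C + (b - C.min' hC) := by
  have hbC : b ∉ C := fun h => (hb b h).false
  rw [blockWt', dif_pos (insert_nonempty b C), blockWt', dif_pos hC, min'_insert _ _ hC,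
    min_eq_right (hb _ (C.min'_mem hC)).le, sum_insert hbC, add_comm]

theorem partitionWt'_addToBlockOf {S : Finset ℕ} {Q : Finset (Finset ℕ)} {i b : ℕ}
    (hQ : IsPartitionOn S Q) (hi : i ∈ S) (hmin : ∀ x ∈ S, i ≤ x) (hmax : ∀ x ∈ S, x < b) :
    partitionWt' (addToBlockOf i b Q) = partitionWt' Q + (b - i) := by
  obtain ⟨C₀, hC₀, hiC₀⟩ := hQ.exists_mem hi
  have hbC : ∀ C ∈ Q, b ∉ C := fun C hC h => (hmax b (hQ.subset hC h)).false
  have hinj : Set.InjOn (fun C => if i ∈ C then insert b C else C) (Q : Set (Finset ℕ)) :=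
      fun C hC C' hC' h => by
    simpa only [erase_ite_insert (hbC C hC), erase_ite_insert (hbC C' hC')] using
      congrArg (fun B : Finset ℕ => B.erase b) h
  have hterm : ∀ C ∈ Q, blockWt' (if i ∈ C then insert b C else C) =
      blockWt' C + if i ∈ C then b - i else 0 := fun C hC => by
    split_ifs with hiC
    · have hmin' : C.min' ⟨i, hiC⟩ = i :=
        le_antisymm (min'_le C i hiC) (le_min' _ _ _ fun x hx => hmin x (hQ.subset hC hx))
      rw [blockWt'_insert ⟨i, hiC⟩ fun x hx => hmax x (hQ.subset hC hx), hmin']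
    · rfl
  rw [partitionWt', addToBlockOf, sum_image hinj, sum_congr rfl hterm, sum_add_distrib,
    sum_eq_single_of_mem C₀ hC₀ fun C hC hne => if_neg fun hiC =>
      hne (hQ.eq_of_mem_of_mem hC hC₀ hiC hiC₀), if_pos hiC₀, partitionWt']

theorem partitionWt'_union {S T : Finset ℕ} {P Q : Finset (Finset ℕ)} (hP : IsPartitionOn S P)
    (hQ : IsPartitionOn T Q) (hST : Disjoint S T) :
    partitionWt' (P ∪ Q) = partitionWt' P + partitionWt' Q :=
  sum_union (hP.disjoint hQ hST)

section GeneratingFunction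

-- Classical decidability, as in the statement, so that its sum is `ncGenFun (Icc 1 n)` by `rfl`.
open scoped Classical in
noncomputable def ncPartitions (S : Finset ℕ) : Finset (Finset (Finset ℕ)) :=
  S.powerset.powerset.filter fun P => IsPartitionOn S P ∧ IsNonCrossing P

open scoped Classical in
noncomputable def ncPartitionsLinking (i b : ℕ) : Finset (Finset (Finset ℕ)) :=
  (ncPartitions (Ico i (b + 1))).filter fun H => ∃ B ∈ H, i ∈ B ∧ b ∈ B

noncomputable def ncGenFun (S : Finset ℕ) : ℕ[X] :=
  ∑ P ∈ ncPartitions S, X ^ partitionWt' P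

variable {S : Finset ℕ} {P H : Finset (Finset ℕ)} {a b i : ℕ}

theorem mem_ncPartitions : P ∈ ncPartitions S ↔ IsPartitionOn S P ∧ IsNonCrossing P := by
  simp only [ncPartitions, mem_filter, and_iff_right_iff_imp]
  exact fun h => mem_powerset.mpr fun B hB => mem_powerset.mpr (h.1.subset hB)

theorem mem_ncPartitionsLinking :
    H ∈ ncPartitionsLinking i b ↔
      H ∈ ncPartitions (Ico i (b + 1)) ∧ ∃ B ∈ H, i ∈ B ∧ b ∈ B := by
  simp only [ncPartitionsLinking, mem_filter]

theorem ncGenFun_empty : ncGenFun ∅ = 1 := by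
  have : ncPartitions ∅ = {∅} := by
    ext P
    rw [mem_ncPartitions, mem_singleton]
    refine ⟨fun h => h.1.eq_empty, ?_⟩
    rintro rfl
    exact ⟨IsPartitionOn.empty,
      IsNonCrossing.mono (empty_subset _) fun _ h => absurd h (notMem_empty _)⟩
  simp [ncGenFun, this, partitionWt']

theorem sum_ncPartitionsLinking_self :
    ∑ H ∈ ncPartitionsLinking b b, X ^ partitionWt' H = (1 : ℕ[X]) := by
  have : ncPartitionsLinking b b = {{{b}}} := by
    ext H
    rw [mem_ncPartitionsLinking, mem_ncPartitions, Nat.Ico_succ_singleton, mem_singleton]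
    refine ⟨fun h => h.1.1.eq_singleton_singleton, ?_⟩
    rintro rfl
    refine ⟨⟨IsPartitionOn.singleton b, ?_⟩, {b}, mem_singleton_self _, by simp⟩
    intro B₁ h₁ B₂ h₂
    simp_all
  simp [this, partitionWt', blockWt']

theorem sum_ncPartitionsLinking (hib : i ≤ b) :
    ∑ H ∈ ncPartitionsLinking i b, X ^ partitionWt' H = X ^ (b - i) * ncGenFun (Ico i b) := by
  rcases hib.lt_or_eq with hib | rfl
  swap
  · rw [sum_ncPartitionsLinking_self, Nat.sub_self, pow_zero, Ico_self, ncGenFun_empty, one_mul]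
  have hground : insert b (Ico i b) = Ico i (b + 1) :=
    (Nat.Ico_succ_right_eq_insert_Ico hib.le).symm
  have hi : i ∈ Ico i b := left_mem_Ico.mpr hib
  have hb : b ∉ Ico i b := right_notMem_Ico
  have hmin : ∀ x ∈ Ico i b, i ≤ x := fun x hx => (mem_Ico.mp hx).1
  have hmax : ∀ x ∈ Ico i b, x < b := fun x hx => (mem_Ico.mp hx).2
  rw [ncGenFun, mul_sum]
  symm
  refine sum_nbij' (addToBlockOf i b) (fun H => H.image (·.erase b)) ?_ ?_ ?_ ?_ ?_
  · intro Q hQ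
    obtain ⟨hQ, hNC⟩ := mem_ncPartitions.mp hQ
    exact mem_ncPartitionsLinking.mpr ⟨mem_ncPartitions.mpr
      ⟨hground ▸ hQ.addToBlockOf hi hb, hNC.addToBlockOf hQ hmin hmax⟩,
      exists_mem_addToBlockOf hQ hi⟩
  · intro H hH
    obtain ⟨hH, B, hB, hiB, hbB⟩ := mem_ncPartitionsLinking.mp hH
    obtain ⟨hH, hNC⟩ := mem_ncPartitions.mp hH
    have hsingleton : {b} ∉ H := fun h => hib.ne <| mem_singleton.mp <|
      hH.eq_of_mem_of_mem hB h hbB (mem_singleton_self b) ▸ hiB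
    refine mem_ncPartitions.mpr ⟨?_, hNC.image_of_subset fun B _ => erase_subset b B⟩
    simpa [← hground, erase_insert hb] using hH.image_erase hsingleton
  · exact fun Q hQ => image_erase_addToBlockOf (mem_ncPartitions.mp hQ).1 hb
  · intro H hH
    obtain ⟨hH, hlink⟩ := mem_ncPartitionsLinking.mp hH
    exact addToBlockOf_image_erase (mem_ncPartitions.mp hH).1 hlink hib.ne
  · intro Q hQ
    rw [partitionWt'_addToBlockOf (mem_ncPartitions.mp hQ).1 hi hmin hmax, pow_add, mul_comm]

theorem union_mem_ncPartitions (hi : i ∈ Ico a (b + 1)) (hP : P ∈ ncPartitions (Ico a i))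
    (hH : H ∈ ncPartitionsLinking i b) : P ∪ H ∈ ncPartitions (Ico a (b + 1)) := by
  obtain ⟨hai, hib⟩ := mem_Ico.mp hi
  obtain ⟨hP, hPNC⟩ := mem_ncPartitions.mp hP
  obtain ⟨hH, hHNC⟩ := mem_ncPartitions.mp (mem_ncPartitionsLinking.mp hH).1
  refine mem_ncPartitions.mpr ⟨?_, hPNC.union hHNC (fun _ => hP.subset) (fun _ => hH.subset)
    fun x hx y hy => (mem_Ico.mp hx).2.trans_le (mem_Ico.mp hy).1⟩
  rw [← Ico_union_Ico_eq_Ico hai hib.le]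
  exact hP.union hH (Ico_disjoint_Ico_consecutive a i (b + 1))

theorem eq_of_union_eq_union {i' : ℕ} {P' H' : Finset (Finset ℕ)} (hi : i ∈ Ico a (b + 1))
    (hP : P ∈ ncPartitions (Ico a i)) (hH : H ∈ ncPartitionsLinking i b)
    (hP' : P' ∈ ncPartitions (Ico a i')) (hH' : H' ∈ ncPartitionsLinking i' b)
    (heq : P ∪ H = P' ∪ H') : i = i' ∧ P = P' ∧ H = H' := by
  have hπ := (mem_ncPartitions.mp (union_mem_ncPartitions hi hP hH)).1
  obtain ⟨hH, B, hB, hiB, hbB⟩ := mem_ncPartitionsLinking.mp hH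
  obtain ⟨hH', B', hB', hi'B', hbB'⟩ := mem_ncPartitionsLinking.mp hH'
  replace hP := (mem_ncPartitions.mp hP).1
  replace hP' := (mem_ncPartitions.mp hP').1
  replace hH := (mem_ncPartitions.mp hH).1
  replace hH' := (mem_ncPartitions.mp hH').1
  obtain rfl : B = B' := hπ.eq_of_mem_of_mem (mem_union_right _ hB)
    (heq ▸ mem_union_right _ hB') hbB hbB'
  obtain rfl : i = i' :=
    le_antisymm (mem_Ico.mp (hH.subset hB hi'B')).1 (mem_Ico.mp (hH'.subset hB' hiB)).1
  have hdisj := Ico_disjoint_Ico_consecutive a i (b + 1)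
  refine ⟨rfl, ?_, ?_⟩
  · rw [← hP.filter_union_left hH hdisj, heq, hP'.filter_union_left hH' hdisj]
  · rw [← hH.filter_union_left hP hdisj.symm, union_comm, heq, union_comm,
      hH'.filter_union_left hP' hdisj.symm]

theorem exists_union_eq {π : Finset (Finset ℕ)} (hab : a ≤ b)
    (hπ : π ∈ ncPartitions (Ico a (b + 1))) :
    ∃ i ∈ Ico a (b + 1), ∃ P ∈ ncPartitions (Ico a i), ∃ H ∈ ncPartitionsLinking i b,
      P ∪ H = π := by
  obtain ⟨hπ, hNC⟩ := mem_ncPartitions.mp hπ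
  obtain ⟨B₀, hB₀, hbB₀⟩ := hπ.exists_mem (mem_Ico.mpr ⟨hab, b.lt_succ_self⟩)
  set i := B₀.min' ⟨b, hbB₀⟩
  have hiB₀ : i ∈ B₀ := min'_mem _ _
  have hsep := hπ.subset_Ico_or_subset_Ico hNC hB₀ hiB₀ hbB₀ fun x hx => min'_le _ x hx
  have hi : i ∈ Ico a (b + 1) := hπ.subset hB₀ hiB₀
  have hdisj := Ico_disjoint_Ico_consecutive a i (b + 1)
  have hB₀high : B₀ ⊆ Ico i (b + 1) :=
    (hsep B₀ hB₀).resolve_left fun h => right_notMem_Ico (h hiB₀)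
  refine ⟨i, hi, π.filter (· ⊆ Ico a i), ?_, π.filter (· ⊆ Ico i (b + 1)), ?_, ?_⟩
  · refine mem_ncPartitions.mpr ⟨hπ.filter_subset (fun B hB => ?_) ?_, hNC.mono (filter_subset _ _)⟩
    · exact (hsep B hB).imp_right fun h => hdisj.symm.mono_left h
    · exact Ico_subset_Ico_right (mem_Ico.mp hi).2.le
  · refine mem_ncPartitionsLinking.mpr ⟨mem_ncPartitions.mpr
      ⟨hπ.filter_subset (fun B hB => ?_) ?_, hNC.mono (filter_subset _ _)⟩,
      B₀, mem_filter.mpr ⟨hB₀, hB₀high⟩, hiB₀, hbB₀⟩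
    · exact (hsep B hB).symm.imp_right fun h => hdisj.mono_left h
    · exact Ico_subset_Ico_left (mem_Ico.mp hi).1
  · rw [← filter_or, filter_true_of_mem hsep]

theorem ncGenFun_Ico_add_one (hab : a ≤ b) :
    ncGenFun (Ico a (b + 1)) =
      ∑ i ∈ Ico a (b + 1), X ^ (b - i) * ncGenFun (Ico a i) * ncGenFun (Ico i b) := by
  have hlinking : ∀ i ∈ Ico a (b + 1), X ^ (b - i) * ncGenFun (Ico a i) * ncGenFun (Ico i b) =
      ncGenFun (Ico a i) * ∑ H ∈ ncPartitionsLinking i b, X ^ partitionWt' H := fun i hi => by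
    rw [sum_ncPartitionsLinking (Nat.lt_succ_iff.mp (mem_Ico.mp hi).2)]
    ring
  rw [sum_congr rfl hlinking]
  simp only [ncGenFun, sum_mul_sum, ← pow_add]
  simp_rw [← sum_product']
  rw [sum_sigma']
  symm
  refine sum_nbij (fun x => x.2.1 ∪ x.2.2) ?_ ?_ ?_ ?_
  · rintro ⟨i, P, H⟩ hx
    simp only [mem_sigma, mem_product] at hx
    exact union_mem_ncPartitions hx.1 hx.2.1 hx.2.2
  · rintro ⟨i, P, H⟩ hx ⟨i', P', H'⟩ hx' heq
    simp only [coe_sigma, Set.mem_sigma_iff, coe_product, Set.mem_prod, mem_coe] at hx hx'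
    obtain ⟨rfl, rfl, rfl⟩ := eq_of_union_eq_union hx.1 hx.2.1 hx.2.2 hx'.2.1 hx'.2.2 heq
    rfl
  · intro π hπ
    obtain ⟨i, hi, P, hP, H, hH, rfl⟩ := exists_union_eq hab hπ
    exact ⟨⟨i, P, H⟩, mem_sigma.mpr ⟨hi, mem_product.mpr ⟨hP, hH⟩⟩, rfl⟩
  · rintro ⟨i, P, H⟩ hx
    simp only [mem_sigma, mem_product] at hx
    rw [partitionWt'_union (mem_ncPartitions.mp hx.2.1).1
      (mem_ncPartitions.mp (mem_ncPartitionsLinking.mp hx.2.2).1).1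
      (Ico_disjoint_Ico_consecutive a i (b + 1))]

end GeneratingFunction

theorem Nat.add_choose_two (a b : ℕ) : (a + b).choose 2 = a.choose 2 + b.choose 2 + a * b := by
  induction b with
  | zero => simp
  | succ b ih =>
    rw [← add_assoc, Nat.choose_succ_succ, ih, Nat.choose_succ_succ b, Nat.choose_one_right,
      Nat.choose_one_right]
    ring

theorem Nat.add_add_one_choose_two (a b : ℕ) :
    (a + b + 1).choose 2 = a.choose 2 + b.choose 2 + (a * b + (a + b)) := by
  rw [Nat.choose_succ_succ, Nat.choose_one_right, Nat.add_choose_two]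
  ring

theorem carlitz_succ (n : ℕ) :
    carlitz (n + 1) =
      ∑ k ∈ range (n + 1), carlitz k * carlitz (n - k) * X ^ ((k + 1) * (n - k)) := by
  rw [carlitz]
  exact sum_attach _ fun k => carlitz k * carlitz (n - k) * X ^ ((k + 1) * (n - k))

theorem natDegree_carlitz_le (n : ℕ) : (carlitz n).natDegree ≤ n.choose 2 := by
  induction n using Nat.strong_induction_on with
  | _ n ih =>
  cases n with
  | zero => simp [carlitz]
  | succ n =>
    rw [carlitz_succ]
    refine natDegree_sum_le_of_forall_le _ _ fun k hk => ?_
    obtain ⟨m, rfl⟩ := Nat.exists_eq_add_of_le (Nat.lt_succ_iff.mp (mem_range.mp hk))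
    rw [Nat.add_sub_cancel_left, Nat.add_add_one_choose_two]
    refine natDegree_mul_le_of_le (natDegree_mul_le_of_le (ih k (by omega)) (ih m (by omega)))
      ((natDegree_X_pow_le _).trans ?_)
    rw [add_one_mul]
    omega

noncomputable def reflectedCarlitz (n : ℕ) : ℕ[X] := reflect (n.choose 2) (carlitz n)

theorem reflectedCarlitz_zero : reflectedCarlitz 0 = 1 := by
  simp [reflectedCarlitz, carlitz]

theorem Polynomial.reflect_sum {R ι : Type*} [Semiring R] (N : ℕ) (s : Finset ι) (f : ι → R[X]) :
    reflect N (∑ i ∈ s, f i) = ∑ i ∈ s, reflect N (f i) := by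
  ext
  simp only [coeff_reflect, finsetSum_coeff]

theorem reflectedCarlitz_succ (n : ℕ) :
    reflectedCarlitz (n + 1) =
      ∑ k ∈ range (n + 1), X ^ k * reflectedCarlitz k * reflectedCarlitz (n - k) := by
  rw [reflectedCarlitz, carlitz_succ, reflect_sum]
  refine sum_congr rfl fun k hk => ?_
  obtain ⟨m, rfl⟩ := Nat.exists_eq_add_of_le (Nat.lt_succ_iff.mp (mem_range.mp hk))
  have hexp : (k + 1) * m ≤ k * m + (k + m) := by rw [add_one_mul]; omega
  have hdeg : (X ^ ((k + 1) * m) : ℕ[X]).natDegree ≤ k * m + (k + m) :=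
    (natDegree_X_pow_le _).trans hexp
  rw [Nat.add_sub_cancel_left, Nat.add_add_one_choose_two, reflect_mul _ _
      (natDegree_mul_le_of_le (natDegree_carlitz_le k) (natDegree_carlitz_le m)) hdeg,
    reflect_mul _ _ (natDegree_carlitz_le k) (natDegree_carlitz_le m), reflect_monomial,
    revAt_le hexp, (by rw [add_one_mul]; omega : k * m + (k + m) - (k + 1) * m = k),
    reflectedCarlitz, reflectedCarlitz, mul_comm, mul_assoc]

theorem revAt_eq_reflect {D : ℕ} {p : ℕ[X]} (h : p.natDegree ≤ D) :
    _root_.revAt D p = reflect D p := by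
  rw [(reflect D p).as_sum_range_C_mul_X_pow'
      (Nat.lt_succ_of_le (natDegree_reflect_le.trans (max_le le_rfl h))), _root_.revAt]
  refine sum_congr rfl fun i hi => ?_
  rw [coeff_reflect, revAt_le (Nat.lt_succ_iff.mp (mem_range.mp hi))]

theorem ncGenFun_Ico_add (a m : ℕ) : ncGenFun (Ico a (a + m)) = reflectedCarlitz m := by
  induction m using Nat.strong_induction_on generalizing a with
  | _ m ih =>
  cases m with
  | zero => rw [add_zero, Ico_self, ncGenFun_empty, reflectedCarlitz_zero]
  | succ m =>
    rw [← add_assoc, ncGenFun_Ico_add_one (Nat.le_add_right a m), sum_Ico_eq_sum_range,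
      (by omega : a + m + 1 - a = m + 1), reflectedCarlitz_succ, ← sum_range_reflect]
    refine sum_congr rfl fun j hj => ?_
    obtain ⟨k, rfl⟩ := Nat.exists_eq_add_of_le (Nat.lt_succ_iff.mp (mem_range.mp hj))
    rw [(by omega : j + k + 1 - 1 - j = k), (by omega : a + (j + k) - (a + k) = j),
      ih k (by omega), (by omega : a + (j + k) = a + k + j), ih j (by omega),
      Nat.add_sub_cancel_left]
    ring

open scoped Classical in
/-- `∑_{π ∈ NC(n)} q^{wt'(π)} = q^{binom(n,2)} C_n(q^{-1})`, where
`wt'(π) = ∑_{B ∈ π} ∑_{j ∈ B} (j - min B)` and `C_n` is the Carlitz `q`-Catalan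
polynomial. -/
theorem NC_wt'_gen_eq_reversed_carlitz (n : ℕ) :
    (∑ P ∈ ((Finset.Icc 1 n).powerset.powerset).filter
        (fun P => IsPartitionOf n P ∧ IsNonCrossing P),
      (X : Polynomial ℕ) ^ (∑ B ∈ P, blockWt' B)) =
    revAt (n.choose 2) (carlitz n) := by
  calc _ = ncGenFun (Icc 1 n) := rfl
    _ = ncGenFun (Ico 1 (1 + n)) := by rw [add_comm, Ico_add_one_right_eq_Icc]
    _ = reflectedCarlitz n := ncGenFun_Ico_add 1 n
    _ = revAt (n.choose 2) (carlitz n) := (revAt_eq_reflect (natDegree_carlitz_le n)).symm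
end

section
/- For a 231-avoiding permutation π of [n], the descent set Des(π) = {i : π_i > π_{i+1}} ∪ {n} and the inverse descent set iDes(π) = Des(π^{-1}) have the same cardinality. -/
/-!
For a 231-avoiding `σ`, the map `a ↦ σ a - 1` sends the descents of `σ` to those of `σ⁻¹`, and
`v ↦ σ⁻¹ (v + 1)` sends them back. The two maps are mutually inverse on these sets, and each can
only leave its target set by exhibiting a `231`.
-/

open Finset

/-- The value of `σ` at the 0-based position `i` (junk `0` out of range). -/
def permVal {n : ℕ} (σ : Equiv.Perm (Fin n)) (i : ℕ) : ℕ :=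
  if h : i < n then (σ ⟨i, h⟩ : ℕ) else 0

/-- The augmented descent set `Des(σ) = {i : σ_i > σ_{i+1}} ∪ {n}` (1-based
positions). -/
def DesAug (n : ℕ) (σ : Equiv.Perm (Fin n)) : Finset ℕ :=
  insert n (((Finset.range (n - 1)).filter
    (fun i => permVal σ (i + 1) < permVal σ i)).image (· + 1))

/-- A permutation is 231-avoiding: no `i < j < k` with `σ k < σ i < σ j`. -/
def PermAvoids231 {n : ℕ} (σ : Equiv.Perm (Fin n)) : Prop :=
  ¬ ∃ i j k : Fin n, i < j ∧ j < k ∧ σ k < σ i ∧ σ i < σ j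

namespace Equiv.Perm

variable {n : ℕ} (σ : Equiv.Perm (Fin n))

lemma permVal_of_lt {i : ℕ} (hi : i < n) : permVal σ i = σ ⟨i, hi⟩ := dif_pos hi

lemma permVal_lt {i : ℕ} (hi : i < n) : permVal σ i < n := by
  rw [permVal_of_lt σ hi]
  exact Fin.isLt _

lemma permVal_inv_permVal {i : ℕ} (hi : i < n) : permVal σ⁻¹ (permVal σ i) = i := by
  rw [permVal_of_lt σ hi, permVal_of_lt σ⁻¹ (Fin.isLt _)]
  simp

lemma permVal_permVal_inv {v : ℕ} (hv : v < n) : permVal σ (permVal σ⁻¹ v) = v := by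
  simpa using permVal_inv_permVal σ⁻¹ hv

lemma permVal_inj {i j : ℕ} (hi : i < n) (hj : j < n) :
    permVal σ i = permVal σ j ↔ i = j := by
  refine ⟨fun h => ?_, congrArg _⟩
  rw [← permVal_inv_permVal σ hi, h, permVal_inv_permVal σ hj]

def descents : Finset ℕ :=
  (range (n - 1)).filter fun i => permVal σ (i + 1) < permVal σ i

lemma mem_descents {i : ℕ} :
    i ∈ descents σ ↔ i + 1 < n ∧ permVal σ (i + 1) < permVal σ i := by
  rw [descents, mem_filter, mem_range]
  omega

lemma card_desAug : (DesAug n σ).card = (descents σ).card + 1 := by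
  rw [DesAug, card_insert_of_notMem, card_image_of_injective _ (add_left_injective 1)]
  · rfl
  simp only [mem_image, mem_filter, mem_range]
  omega

end Equiv.Perm

namespace PermAvoids231

open Equiv.Perm

variable {n : ℕ} {σ : Equiv.Perm (Fin n)}

lemma not_permVal_pattern (hσ : PermAvoids231 σ) {i j k : ℕ} (hij : i < j) (hjk : j < k)
    (hk : k < n) : ¬ (permVal σ k < permVal σ i ∧ permVal σ i < permVal σ j) := by
  rintro ⟨hki, hij'⟩
  refine hσ ⟨⟨i, by omega⟩, ⟨j, by omega⟩, ⟨k, hk⟩, hij, hjk, ?_, ?_⟩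
  · rwa [permVal_of_lt σ hk, permVal_of_lt σ (by omega)] at hki
  · rwa [permVal_of_lt σ (by omega : i < n), permVal_of_lt σ (by omega : j < n)] at hij'

/-- At a descent `a`, the value `σ a - 1` must sit to the right of `a`: otherwise it would be
the `2` of a `231` together with `σ a` and `σ (a + 1)`. -/
lemma permVal_sub_one_mem_descents_inv (hσ : PermAvoids231 σ) {a : ℕ} (ha : a ∈ descents σ) :
    permVal σ a - 1 ∈ descents σ⁻¹ := by
  obtain ⟨ha1, hdes⟩ := (mem_descents σ).1 ha
  have hσa := permVal_lt σ (by omega : a < n)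
  rw [mem_descents, Nat.sub_add_cancel (by omega), permVal_inv_permVal σ (by omega)]
  refine ⟨by omega, ?_⟩
  set p := permVal σ⁻¹ (permVal σ a - 1)
  have hp : p < n := permVal_lt σ⁻¹ (by omega)
  have hσp : permVal σ p = permVal σ a - 1 := permVal_permVal_inv σ (by omega)
  by_contra! hpa
  have hpa' : p ≠ a := fun h => by rw [h] at hσp; omega
  have hpa1 : permVal σ (a + 1) ≠ permVal σ p := fun h => by
    rw [permVal_inj σ ha1 hp] at h; omega
  exact not_permVal_pattern hσ (i := p) (by omega) (Nat.lt_add_one a) ha1 (by omega)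

/-- If `v + 1` stands left of `v`, then `σ` descends right after `v + 1`: a larger entry there
would be the `3` of a `231` together with `v + 1` and `v`. -/
lemma permVal_inv_add_one_mem_descents (hσ : PermAvoids231 σ) {v : ℕ} (hv : v ∈ descents σ⁻¹) :
    permVal σ⁻¹ (v + 1) ∈ descents σ := by
  obtain ⟨hv1, hdes⟩ := (mem_descents σ⁻¹).1 hv
  set i := permVal σ⁻¹ (v + 1)
  set k := permVal σ⁻¹ v
  have hk : k < n := permVal_lt σ⁻¹ (by omega)
  have hσi : permVal σ i = v + 1 := permVal_permVal_inv σ hv1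
  have hσk : permVal σ k = v := permVal_permVal_inv σ (by omega)
  have hi1 : i + 1 < n := by omega
  rw [mem_descents, hσi]
  refine ⟨hi1, ?_⟩
  by_contra! hasc
  have hne : i + 1 ≠ k := fun h => by rw [h] at hasc; omega
  have hne' : permVal σ (i + 1) ≠ v + 1 := fun h => by
    rw [← hσi, permVal_inj σ hi1 (by omega)] at h; omega
  exact not_permVal_pattern hσ (Nat.lt_add_one i) (by omega) hk (by omega)

lemma card_descents_eq_card_descents_inv (hσ : PermAvoids231 σ) :
    (descents σ).card = (descents σ⁻¹).card := by
  refine card_nbij' (fun a => permVal σ a - 1) (fun v => permVal σ⁻¹ (v + 1))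
    (fun a ha => permVal_sub_one_mem_descents_inv hσ ha)
    (fun v hv => permVal_inv_add_one_mem_descents hσ hv) ?_ ?_
  · intro a ha
    obtain ⟨ha1, hdes⟩ := (mem_descents σ).1 ha
    dsimp only
    rw [Nat.sub_add_cancel (by omega), permVal_inv_permVal σ (by omega)]
  · intro v hv
    obtain ⟨hv1, -⟩ := (mem_descents σ⁻¹).1 hv
    simp [permVal_permVal_inv σ hv1]

end PermAvoids231

open Equiv.Perm

/-- For a 231-avoiding permutation `σ`, the augmented descent set
`Des(σ) = {i : σ_i > σ_{i+1}} ∪ {n}` and the inverse descent set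
`iDes(σ) = Des(σ⁻¹)` have the same cardinality. -/
theorem card_Des_eq_card_iDes_of_avoiding231 (n : ℕ) (σ : Equiv.Perm (Fin n))
    (hσ : PermAvoids231 σ) :
    (DesAug n σ).card = (DesAug n σ⁻¹).card := by
  rw [card_desAug, card_desAug, PermAvoids231.card_descents_eq_card_descents_inv hσ]
end
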